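/- For every odd integer k ≥ 1 and every integer t ≥ 3, there exists a coloring of the edges of the complete graph on (t − 1)·5^{(k−1)/2} vertices using k colors that contains no rainbow triangle and no monochromatic copy of S_t^+. -/

import Mathlib

/-!
Write `k = 2m + 1`. Words `f : Fin m → Fin 5` are colored by the last position `J` where two
of them differ together with the pentagon color of `s(f J, g J)`: this iterated lexicographic
product of the pentagon 2-coloring of `K₅` uses `2m` colors and has neither rainbow nor
monochromatic triangles, since every triangle is either isosceles with a differently colored
base or sits over a triangle of `K₅`. Blowing each word up into a `K_{t-1}` in one extra color
gives the coloring: a monochromatic `S_t^+` in the extra color would need `t` vertices in one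
clique, and in any other color it contains a monochromatic triangle.
-/

open SimpleGraph

/-- `S_t^+`: the star on `t` vertices (center `0`, leaves `1, …, t-1`)
together with one extra edge between the leaves `1` and `2`, forming a triangle. -/
def starPlus (t : ℕ) : SimpleGraph (Fin t) :=
  SimpleGraph.fromRel (fun a b => a.val = 0 ∨ (a.val = 1 ∧ b.val = 2))

/-- `P_t^+`: the path on `t` vertices `0, 1, …, t-1` (in order) together with
the extra edge between `0` and `2`, forming a triangle at one end. -/
def pathPlus (t : ℕ) : SimpleGraph (Fin t) :=
  SimpleGraph.fromRel (fun a b => b.val = a.val + 1 ∨ (a.val = 0 ∧ b.val = 2))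

/-- An edge-coloring `c` of the complete graph on `V` contains a copy of `H`
in color `col`: an injective map of the vertices of `H` into `V` sending every
edge of `H` to a pair colored `col`. -/
def HasCopyIn {V C α : Type*} (c : Sym2 V → C) (col : C) (H : SimpleGraph α) : Prop :=
  ∃ f : α → V, Function.Injective f ∧ ∀ a b : α, H.Adj a b → c s(f a, f b) = col

/-- An edge-coloring `c` of the complete graph on `V` contains a monochromatic copy of `H`. -/
def HasMonoCopy {V C α : Type*} (c : Sym2 V → C) (H : SimpleGraph α) : Prop :=
  ∃ col : C, HasCopyIn c col H

/-- An edge-coloring `c` of the complete graph on `V` contains a rainbow triangle: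
three vertices whose three pairwise edges get pairwise distinct colors. -/
def HasRainbowTriangle {V C : Type*} (c : Sym2 V → C) : Prop :=
  ∃ u v w : V, u ≠ v ∧ u ≠ w ∧ v ≠ w ∧
    c s(u, v) ≠ c s(u, w) ∧ c s(u, v) ≠ c s(v, w) ∧ c s(u, w) ≠ c s(v, w)

/-- The `k`-color Gallai-Ramsey number `gr_k(K_3 : H)`: the least `n` such that every
`k`-coloring of the edges of `K_n` contains a rainbow triangle or a monochromatic copy of `H`. -/
noncomputable def grK3 (k : ℕ) {α : Type*} (H : SimpleGraph α) : ℕ :=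
  sInf {n : ℕ | ∀ c : Sym2 (Fin n) → Fin k, HasRainbowTriangle c ∨ HasMonoCopy c H}

/-- The `2`-color Ramsey number `R(G, H)`: the least `n` such that every red/blue
(`0`/`1`) coloring of the edges of `K_n` contains a red copy of `G` or a blue copy of `H`. -/
noncomputable def ramsey2 {α β : Type*} (G : SimpleGraph α) (H : SimpleGraph β) : ℕ :=
  sInf {n : ℕ | ∀ c : Sym2 (Fin n) → Fin 2, HasCopyIn c 0 G ∨ HasCopyIn c 1 H}

def HasMonoTriangle {V C : Type*} (c : Sym2 V → C) : Prop :=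
  ∃ u v w : V, u ≠ v ∧ u ≠ w ∧ v ≠ w ∧ c s(u, v) = c s(u, w) ∧ c s(u, v) = c s(v, w)

section Transport

variable {V W C D α : Type*}

lemma HasRainbowTriangle.of_comp {c : Sym2 V → C} {e : C → D}
    (h : HasRainbowTriangle (e ∘ c)) : HasRainbowTriangle c := by
  obtain ⟨u, v, w, huv, huw, hvw, h₁, h₂, h₃⟩ := h
  exact ⟨u, v, w, huv, huw, hvw, fun h => h₁ (congrArg e h), fun h => h₂ (congrArg e h),
    fun h => h₃ (congrArg e h)⟩

lemma HasRainbowTriangle.of_comp_map {c : Sym2 W → C} {φ : V → W}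
    (h : HasRainbowTriangle (c ∘ Sym2.map φ)) : HasRainbowTriangle c := by
  obtain ⟨u, v, w, -, -, -, h₁, h₂, h₃⟩ := h
  -- if two of `φ u, φ v, φ w` coincide, the two edges to the third vertex get the same color
  refine ⟨φ u, φ v, φ w, fun e => h₃ ?_, fun e => h₂ ?_, fun e => h₁ ?_, h₁, h₂, h₃⟩ <;>
    simp [e, Sym2.eq_swap]

lemma HasMonoCopy.of_equiv_comp {c : Sym2 V → C} (e : C ≃ D) {H : SimpleGraph α}
    (h : HasMonoCopy (e ∘ c) H) : HasMonoCopy c H := by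
  obtain ⟨col, f, hf, hcol⟩ := h
  exact ⟨e.symm col, f, hf, fun a b hab => e.eq_symm_apply.mpr (hcol a b hab)⟩

lemma HasMonoCopy.of_comp_map {c : Sym2 W → C} {φ : V → W} (hφ : Function.Injective φ)
    {H : SimpleGraph α} (h : HasMonoCopy (c ∘ Sym2.map φ) H) : HasMonoCopy c H := by
  obtain ⟨col, f, hf, hcol⟩ := h
  exact ⟨col, φ ∘ f, hφ.comp hf, hcol⟩

end Transport

lemma not_hasRainbowTriangle_of_bool {V : Type*} (c : Sym2 V → Bool) :
    ¬HasRainbowTriangle c := by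
  rintro ⟨u, v, w, -, -, -, h₁, h₂, h₃⟩
  revert h₁ h₂ h₃
  cases c s(u, v) <;> cases c s(u, w) <;> cases c s(v, w) <;> simp

section Lex

open Finset

variable {ι α β : Type*} [LinearOrder ι] [Fintype ι] [DecidableEq α]

def lexColor (b : Sym2 α → β) (f g : ι → α) : WithBot (ι × β) :=
  (univ.filter fun i => f i ≠ g i).max.map fun J => (J, b s(f J, g J))

variable {b : Sym2 α → β}

lemma lexColor_comm (b : Sym2 α → β) (f g : ι → α) : lexColor b f g = lexColor b g f := by
  unfold lexColor
  congr 1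
  · simp only [Sym2.eq_swap]
  · simp only [ne_comm]

lemma lexColor_eq_bot_iff {f g : ι → α} : lexColor b f g = ⊥ ↔ f = g := by
  simp [lexColor, Finset.max_eq_bot, filter_eq_empty_iff, funext_iff]

lemma lexColor_eq_coe {f g : ι → α} {J : ι} (hJ : f J ≠ g J) (habove : ∀ j, J < j → f j = g j) :
    lexColor b f g = ((J, b s(f J, g J)) : ι × β) := by
  have hmax : (univ.filter fun i => f i ≠ g i).max = J :=
    le_antisymm
      (Finset.max_le fun j hj => WithBot.coe_le_coe.mpr
        (not_lt.mp fun hJj => (mem_filter.mp hj).2 (habove j hJj)))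
      (le_max (by simpa using hJ))
  rw [lexColor, hmax, WithBot.map_coe]

lemma ne_of_lexColor_eq_coe {f g : ι → α} {J : ι} {x : β}
    (h : lexColor b f g = ((J, x) : ι × β)) : f J ≠ g J := by
  obtain ⟨J', hJ', hx⟩ := WithBot.map_eq_some_iff.mp h
  cases hx
  simpa using mem_of_max hJ'

lemma exists_top_disagreement {f g : ι → α} (h : ι → α) (hfg : f ≠ g) :
    ∃ J, ¬(f J = g J ∧ f J = h J) ∧ ∀ j, J < j → f j = g j ∧ f j = h j := by
  obtain ⟨i, hi⟩ := Function.ne_iff.mp hfg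
  obtain ⟨J, hJ, hmax⟩ := (univ.filter fun j => ¬(f j = g j ∧ f j = h j)).exists_max_image id
    ⟨i, by simp [hi]⟩
  refine ⟨J, (mem_filter.mp hJ).2, fun j hJj => ?_⟩
  by_contra hj
  exact (hmax j (by simpa using hj)).not_gt hJj

lemma lexColor_isosceles {f g h : ι → α} {J : ι} (hfg : f J = g J) (hfh : f J ≠ h J)
    (habove : ∀ j, J < j → f j = g j ∧ f j = h j) :
    lexColor b f h = lexColor b g h ∧ lexColor b f g ≠ lexColor b f h := by
  rw [lexColor_eq_coe hfh fun j hj => (habove j hj).2,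
    lexColor_eq_coe (hfg ▸ hfh) fun j hj => (habove j hj).1.symm.trans (habove j hj).2, hfg]
  exact ⟨rfl, fun h => ne_of_lexColor_eq_coe h hfg⟩

lemma lexColor_triangle {f g h : ι → α} (hfg : f ≠ g) :
    (∃ J, f J ≠ g J ∧ f J ≠ h J ∧ g J ≠ h J ∧
      lexColor b f g = ((J, b s(f J, g J)) : ι × β) ∧
      lexColor b f h = ((J, b s(f J, h J)) : ι × β) ∧
      lexColor b g h = ((J, b s(g J, h J)) : ι × β)) ∨
    (lexColor b f h = lexColor b g h ∧ lexColor b f g ≠ lexColor b f h) ∨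
    (lexColor b f g = lexColor b g h ∧ lexColor b f h ≠ lexColor b f g) ∨
    (lexColor b f g = lexColor b f h ∧ lexColor b g h ≠ lexColor b f g) := by
  obtain ⟨J, hJ, habove⟩ := exists_top_disagreement h hfg
  by_cases hfgJ : f J = g J
  · exact Or.inr <| Or.inl <| lexColor_isosceles hfgJ (fun e => hJ ⟨hfgJ, e⟩) habove
  by_cases hfhJ : f J = h J
  · obtain ⟨h₁, h₂⟩ := lexColor_isosceles (b := b) hfhJ hfgJ fun j hj => (habove j hj).symm
    exact Or.inr <| Or.inr <| Or.inl ⟨h₁.trans (lexColor_comm b h g), h₂⟩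
  by_cases hghJ : g J = h J
  · obtain ⟨h₁, h₂⟩ := lexColor_isosceles (b := b) hghJ (Ne.symm hfgJ) fun j hj =>
      ⟨(habove j hj).1.symm.trans (habove j hj).2, (habove j hj).1.symm⟩
    rw [lexColor_comm b g f, lexColor_comm b h f] at h₁
    exact Or.inr <| Or.inr <| Or.inr ⟨h₁, by rwa [lexColor_comm b g f] at h₂⟩
  refine Or.inl ⟨J, hfgJ, hfhJ, hghJ, lexColor_eq_coe hfgJ fun j hj => (habove j hj).1,
    lexColor_eq_coe hfhJ fun j hj => (habove j hj).2, lexColor_eq_coe hghJ fun j hj => ?_⟩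
  exact (habove j hj).1.symm.trans (habove j hj).2

variable (ι) in
def lexColoring (b : Sym2 α → β) : Sym2 (ι → α) → WithBot (ι × β) :=
  Sym2.lift ⟨lexColor b, lexColor_comm b⟩

lemma lexColoring_eq_bot_iff {f g : ι → α} : lexColoring ι b s(f, g) = ⊥ ↔ f = g :=
  lexColor_eq_bot_iff

lemma not_hasRainbowTriangle_lexColoring (hb : ¬HasRainbowTriangle b) :
    ¬HasRainbowTriangle (lexColoring ι b) := by
  rintro ⟨f, g, h, hfg, -, -, h₁, h₂, h₃⟩
  simp only [lexColoring, Sym2.lift_mk] at h₁ h₂ h₃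
  rcases lexColor_triangle (b := b) (h := h) hfg with
    ⟨J, hfgJ, hfhJ, hghJ, e₁, e₂, e₃⟩ | ⟨e, -⟩ | ⟨e, -⟩ | ⟨e, -⟩
  · simp only [e₁, e₂, e₃] at h₁ h₂ h₃
    exact hb ⟨f J, g J, h J, hfgJ, hfhJ, hghJ, fun e => h₁ (by rw [e]), fun e => h₂ (by rw [e]),
      fun e => h₃ (by rw [e])⟩
  exacts [h₃ e, h₂ e, h₁ e]

lemma not_hasMonoTriangle_lexColoring (hb : ¬HasMonoTriangle b) :
    ¬HasMonoTriangle (lexColoring ι b) := by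
  rintro ⟨f, g, h, hfg, -, -, h₁, h₂⟩
  simp only [lexColoring, Sym2.lift_mk] at h₁ h₂
  rcases lexColor_triangle (b := b) (h := h) hfg with
    ⟨J, hfgJ, hfhJ, hghJ, e₁, e₂, e₃⟩ | ⟨-, e⟩ | ⟨-, e⟩ | ⟨-, e⟩
  · simp only [e₁, e₂, e₃] at h₁ h₂
    exact hb ⟨f J, g J, h J, hfgJ, hfhJ, hghJ, by simpa using h₁, by simpa using h₂⟩
  exacts [e h₁, e h₁.symm, e h₂.symm]

end Lex

def pentagonColoring : Sym2 (Fin 5) → Bool :=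
  Sym2.lift ⟨fun x y => decide (x - y = 1 ∨ y - x = 1), fun x y => by simp only [or_comm]⟩

lemma not_hasMonoTriangle_pentagonColoring : ¬HasMonoTriangle pentagonColoring := by
  unfold HasMonoTriangle pentagonColoring
  decide

lemma starPlus_adj_of_val_eq_zero {t : ℕ} {i j : Fin t} (hi : i.val = 0) (hij : i ≠ j) :
    (starPlus t).Adj i j := by
  simp [starPlus, hij, hi]

lemma starPlus_adj_of_val_eq_one_two {t : ℕ} {i j : Fin t} (hi : i.val = 1) (hj : j.val = 2) :
    (starPlus t).Adj i j := by
  simp [starPlus, hi, hj, Fin.ne_iff_vne]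

lemma not_hasMonoCopy_starPlus_comp_snd {A W C : Type*} [Fintype A] {t : ℕ} (ht : 3 ≤ t)
    (hA : Fintype.card A < t) {c : Sym2 W → C} {c₀ : C} (hc₀ : ∀ x y, c s(x, y) = c₀ ↔ x = y)
    (hc : ¬HasMonoTriangle c) :
    ¬HasMonoCopy (c ∘ Sym2.map (Prod.snd : A × W → W)) (starPlus t) := by
  rintro ⟨col, f, hf, hcol⟩
  let v (n : ℕ) (hn : n < t) : Fin t := ⟨n, hn⟩
  have hadj₀ (j : Fin t) (hj : v 0 (by omega) ≠ j) : c s((f (v 0 _)).2, (f j).2) = col :=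
    hcol _ _ (starPlus_adj_of_val_eq_zero rfl hj)
  by_cases hcol₀ : col = c₀
  · have hsnd (j : Fin t) : (f j).2 = (f (v 0 (by omega))).2 := by
      by_cases hj : v 0 (by omega) = j
      · rw [hj]
      · exact ((hc₀ _ _).mp ((hadj₀ j hj).trans hcol₀)).symm
    have hinj : Function.Injective fun j => (f j).1 := fun i j hij =>
      hf (Prod.ext hij ((hsnd i).trans (hsnd j).symm))
    have := Fintype.card_le_of_injective _ hinj
    simp only [Fintype.card_fin] at this
    omega
  · have hne {i j : Fin t} (hij : c s((f i).2, (f j).2) = col) : (f i).2 ≠ (f j).2 :=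
      fun e => hcol₀ (hij ▸ (hc₀ _ _).mpr e)
    have h₀₁ := hadj₀ (v 1 (by omega)) (by simp [v])
    have h₀₂ := hadj₀ (v 2 (by omega)) (by simp [v])
    have h₁₂ : c s((f (v 1 (by omega))).2, (f (v 2 (by omega))).2) = col :=
      hcol _ _ (starPlus_adj_of_val_eq_one_two rfl rfl)
    exact hc ⟨_, _, _, hne h₀₁, hne h₀₂, hne h₁₂, h₀₁.trans h₀₂.symm, h₀₁.trans h₁₂.symm⟩

theorem gallaiRamsey_starPlus_lower_odd_general (k t : ℕ) (hko : Odd k) (ht : 3 ≤ t) :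
    ∃ c : Sym2 (Fin ((t - 1) * 5 ^ ((k - 1) / 2))) → Fin k,
      ¬ HasRainbowTriangle c ∧ ¬ HasMonoCopy c (starPlus t) := by
  obtain ⟨m, rfl⟩ := hko
  rw [show (2 * m + 1 - 1) / 2 = m by omega]
  let σ : Fin ((t - 1) * 5 ^ m) ≃ Fin (t - 1) × (Fin m → Fin 5) :=
    Fintype.equivOfCardEq (by simp)
  let e : WithBot (Fin m × Bool) ≃ Fin (2 * m + 1) :=
    Fintype.equivOfCardEq (Fintype.card_option.trans (by simp [mul_comm]))
  let c := lexColoring (Fin m) pentagonColoring ∘ Sym2.map (Prod.snd : Fin (t - 1) × _ → _)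
  refine ⟨e ∘ c ∘ Sym2.map σ, fun h => ?_, fun h => ?_⟩
  · exact not_hasRainbowTriangle_lexColoring (not_hasRainbowTriangle_of_bool _)
      h.of_comp.of_comp_map.of_comp_map
  · exact not_hasMonoCopy_starPlus_comp_snd ht (by simp only [Fintype.card_fin]; omega)
      (fun _ _ => lexColoring_eq_bot_iff)
      (not_hasMonoTriangle_lexColoring not_hasMonoTriangle_pentagonColoring)
      ((h.of_equiv_comp e).of_comp_map σ.injective)

/-- For every odd `k ≥ 1` and `t ≥ 3`, there is a `k`-coloring of the edges of the
complete graph on `(t-1)·5^((k-1)/2)` vertices with no rainbow triangle and no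
monochromatic copy of `S_t^+`. -/
theorem gallaiRamsey_starPlus_lower_odd (k t : ℕ) (hk : 1 ≤ k) (hko : Odd k) (ht : 3 ≤ t) :
    ∃ c : Sym2 (Fin ((t - 1) * 5 ^ ((k - 1) / 2))) → Fin k,
      ¬ HasRainbowTriangle c ∧ ¬ HasMonoCopy c (starPlus t) :=
  gallaiRamsey_starPlus_lower_odd_general k t hko ht
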